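/- Let μ be an eigenmeasure of the open map T with decay rate Λ. Then: (a) if Λ = 0, then μ(H) = 1, i.e. μ is concentrated in the hole; (b) if Λ = 1, then μ(K) = 1, i.e. μ is an invariant probability measure concentrated on the trapped set; (c) if 0 < Λ < 1, then μ(Γ₊ ∖ K) = 1, i.e. μ is concentrated on the backward trapped set minus the trapped set. -/

import Mathlib

/-!
Taking `S = X` in the eigenvalue equation gives `μ Hᶜ = Λ`. If `Λ = 1` the hole is null, so `μ` is
`T`-invariant and every `T⁻ʲ Hᶜ` has full measure. Since `Γ₋ = T⁻¹ Γ₋ ∩ Hᶜ`, we get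
`μ Γ₋ = Λ μ Γ₋`, forcing `μ Γ₋ = 0` when `Λ < 1`. If `Λ ≠ 0`, each `Tᵏ⁺¹ Hᶜ` has full measure by
induction: the eigenvalue equation for `Tᵏ⁺¹ Hᶜ` reads `Λ μ (Tᵏ⁺¹ Hᶜ) = μ (Tᵏ Hᶜ ∩ Hᶜ) = Λ`.
-/

open MeasureTheory Set Function
open scoped ENNReal

section

variable {X : Type*}

/-- The forward trapped set `Γ₋`. -/
def forwardTrappedSet (T : X → X) (H : Set X) : Set X :=
  ⋂ j : ℕ, T^[j] ⁻¹' Hᶜ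

/-- The backward trapped set `Γ₊`. -/
def backwardTrappedSet (T : X → X) (H : Set X) : Set X :=
  ⋂ j : ℕ, T^[j + 1] '' Hᶜ

lemma forwardTrappedSet_eq_preimage_inter (T : X → X) (H : Set X) :
    forwardTrappedSet T H = T ⁻¹' forwardTrappedSet T H ∩ Hᶜ := by
  simp only [forwardTrappedSet, preimage_iInter, ← preimage_comp, ← iterate_succ]
  rw [← inter_iInter_nat_succ, iterate_zero, preimage_id, inter_comm]

lemma preimage_image_iterate_succ (T : X ≃ X) (s : Set X) (k : ℕ) :
    T ⁻¹' (T^[k + 1] '' s) = T^[k] '' s := by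
  rw [iterate_succ', image_comp, preimage_image_eq _ T.injective]

variable [MeasurableSpace X]

/-- `T ⁻¹' S ∩ Hᶜ` is the preimage of `S` under the open map, the restriction of `T` to `Hᶜ`. -/
def IsEigenmeasure (T : X → X) (H : Set X) (μ : Measure X) (Λ : ℝ≥0∞) : Prop :=
  ∀ S : Set X, MeasurableSet S → μ (T ⁻¹' S ∩ Hᶜ) = Λ * μ S

lemma measurableSet_forwardTrappedSet {T : X → X} (hT : Measurable T) {H : Set X}
    (hH : MeasurableSet H) : MeasurableSet (forwardTrappedSet T H) :=
  .iInter fun j ↦ hH.compl.preimage (hT.iterate j)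

lemma measurableSet_image_iterate {T : X ≃ X} (hT' : Measurable T.symm) {s : Set X}
    (hs : MeasurableSet s) (k : ℕ) : MeasurableSet (T^[k] '' s) := by
  induction k with
  | zero => simpa using hs
  | succ k ih =>
    rw [iterate_succ', image_comp, T.image_eq_preimage_symm]
    exact ih.preimage hT'

lemma measurableSet_backwardTrappedSet {T : X ≃ X} (hT' : Measurable T.symm) {H : Set X}
    (hH : MeasurableSet H) : MeasurableSet (backwardTrappedSet T H) :=
  .iInter fun j ↦ measurableSet_image_iterate hT' hH.compl (j + 1)

lemma measure_iInter_eq_one {μ : Measure X} [IsProbabilityMeasure μ] {s : ℕ → Set X}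
    (hs : ∀ i, MeasurableSet (s i)) (h : ∀ i, μ (s i) = 1) : μ (⋂ i, s i) = 1 := by
  rw [← prob_compl_eq_zero_iff (.iInter hs), compl_iInter]
  exact measure_iUnion_null fun i ↦ (prob_compl_eq_zero_iff (hs i)).2 (h i)

namespace IsEigenmeasure

variable {T : X → X} {H : Set X} {μ : Measure X} {Λ : ℝ≥0∞}

lemma measure_compl_hole [IsProbabilityMeasure μ] (h : IsEigenmeasure T H μ Λ) : μ Hᶜ = Λ := by
  simpa using h univ .univ

lemma rate_ne_top [IsProbabilityMeasure μ] (h : IsEigenmeasure T H μ Λ) : Λ ≠ ∞ :=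
  h.measure_compl_hole ▸ measure_ne_top μ Hᶜ

lemma measure_hole_eq_one [IsProbabilityMeasure μ] (h : IsEigenmeasure T H μ Λ)
    (hH : MeasurableSet H) (hΛ : Λ = 0) : μ H = 1 :=
  (prob_compl_eq_zero_iff hH).1 (h.measure_compl_hole.trans hΛ)

lemma measurePreserving [IsProbabilityMeasure μ] (h : IsEigenmeasure T H μ Λ)
    (hT : Measurable T) (hH : MeasurableSet H) (hΛ : Λ = 1) : MeasurePreserving T μ μ := by
  have hHc : μ Hᶜᶜ = 0 := by
    rw [compl_compl, ← prob_compl_eq_one_iff hH, h.measure_compl_hole, hΛ]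
  refine ⟨hT, Measure.ext fun S hS ↦ ?_⟩
  rw [Measure.map_apply hT hS, ← measure_inter_conull hHc, h S hS, hΛ, one_mul]

lemma measure_forwardTrappedSet_eq_one [IsProbabilityMeasure μ] (h : IsEigenmeasure T H μ Λ)
    (hT : Measurable T) (hH : MeasurableSet H) (hΛ : Λ = 1) :
    μ (forwardTrappedSet T H) = 1 := by
  have hpres := h.measurePreserving hT hH hΛ
  refine measure_iInter_eq_one (fun j ↦ hH.compl.preimage (hT.iterate j)) fun j ↦ ?_
  rw [(hpres.iterate j).measure_preimage hH.compl.nullMeasurableSet, h.measure_compl_hole, hΛ]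

lemma measure_forwardTrappedSet_eq_zero [IsFiniteMeasure μ] (h : IsEigenmeasure T H μ Λ)
    (hT : Measurable T) (hH : MeasurableSet H) (hΛ : Λ < 1) :
    μ (forwardTrappedSet T H) = 0 := by
  have hfix := h _ (measurableSet_forwardTrappedSet hT hH)
  rw [← forwardTrappedSet_eq_preimage_inter, mul_comm] at hfix
  by_contra hne
  exact hΛ.ne ((ENNReal.mul_eq_left hne (measure_ne_top _ _)).1 hfix.symm)

lemma measure_image_iterate_compl_hole [IsProbabilityMeasure μ] {T : X ≃ X}
    (h : IsEigenmeasure T H μ Λ) (hT' : Measurable T.symm) (hH : MeasurableSet H) (hΛ : Λ ≠ 0)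
    (k : ℕ) : μ (T^[k + 1] '' Hᶜ) = 1 := by
  have hmeas := measurableSet_image_iterate hT' hH.compl
  have step : ∀ k, μ (T^[k] '' Hᶜ ∩ Hᶜ) = Λ → μ (T^[k + 1] '' Hᶜ) = 1 := fun k hk ↦ by
    have hfix := h _ (hmeas (k + 1))
    rw [preimage_image_iterate_succ, hk] at hfix
    exact (ENNReal.mul_eq_left hΛ h.rate_ne_top).1 hfix.symm
  induction k with
  | zero => exact step 0 (by simpa using h.measure_compl_hole)
  | succ k ih =>
    refine step (k + 1) ?_
    rw [inter_comm, measure_inter_conull ((prob_compl_eq_zero_iff (hmeas _)).2 ih),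
      h.measure_compl_hole]

lemma measure_backwardTrappedSet_eq_one [IsProbabilityMeasure μ] {T : X ≃ X}
    (h : IsEigenmeasure T H μ Λ) (hT' : Measurable T.symm) (hH : MeasurableSet H) (hΛ : Λ ≠ 0) :
    μ (backwardTrappedSet T H) = 1 :=
  measure_iInter_eq_one (fun j ↦ measurableSet_image_iterate hT' hH.compl (j + 1))
    (h.measure_image_iterate_compl_hole hT' hH hΛ)

end IsEigenmeasure

end

theorem eigenmeasure_support
    {X : Type*} [MeasurableSpace X]
    (T : X ≃ X) (hT : Measurable ⇑T) (hT' : Measurable ⇑T.symm)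
    (H : Set X) (hH : MeasurableSet H)
    (μ : Measure X) [IsProbabilityMeasure μ]
    (Λ : ℝ≥0∞)
    (heig : ∀ S : Set X, MeasurableSet S → μ (⇑T ⁻¹' S ∩ Hᶜ) = Λ * μ S) :
    (Λ = 0 → μ H = 1) ∧
    (Λ = 1 →
      μ ((⋂ j : ℕ, (⇑T)^[j] ⁻¹' Hᶜ) ∩ ⋂ j : ℕ, (⇑T)^[j + 1] '' Hᶜ) = 1) ∧
    (0 < Λ → Λ < 1 →
      μ ((⋂ j : ℕ, (⇑T)^[j + 1] '' Hᶜ) \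
          ((⋂ j : ℕ, (⇑T)^[j] ⁻¹' Hᶜ) ∩ ⋂ j : ℕ, (⇑T)^[j + 1] '' Hᶜ)) = 1) := by
  have h : IsEigenmeasure T H μ Λ := heig
  have hback : Λ ≠ 0 → μ (backwardTrappedSet T H)ᶜ = 0 := fun hΛ ↦
    (prob_compl_eq_zero_iff (measurableSet_backwardTrappedSet hT' hH)).2
      (h.measure_backwardTrappedSet_eq_one hT' hH hΛ)
  refine ⟨h.measure_hole_eq_one hH, fun hΛ ↦ ?_, fun hΛ₀ hΛ₁ ↦ ?_⟩
  · change μ (forwardTrappedSet T H ∩ backwardTrappedSet T H) = 1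
    rw [measure_inter_conull (hback (by simp [hΛ])), h.measure_forwardTrappedSet_eq_one hT hH hΛ]
  · change μ (backwardTrappedSet T H \ (forwardTrappedSet T H ∩ backwardTrappedSet T H)) = 1
    rw [sdiff_inter_self_eq_sdiff,
      measure_sdiff_null (h.measure_forwardTrappedSet_eq_zero hT hH hΛ₁),
      ← prob_compl_eq_zero_iff (measurableSet_backwardTrappedSet hT' hH), hback hΛ₀.ne']
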